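/- Let G and H be graphs and X ⊆ V(G). If G contains a subdivision of H as a subgraph, then G − X contains a subdivision of H − Y as a subgraph for some Y ⊆ V(H) with |Y| ≤ |X|; moreover this subdivision can be taken to be a subgraph of the original subdivision of H. -/

import Mathlib

open SimpleGraph

/-- A witness that `G` contains a subdivision of `H`: injective branch vertices and
internally disjoint linking paths, one for each edge of `H`. -/
structure Subdivision {α β : Type*} (G : SimpleGraph α) (H : SimpleGraph β) where
  branch : β ↪ α
  path : ∀ u v, H.Adj u v → G.Walk (branch u) (branch v)
  isPath : ∀ u v h, (path u v h).IsPath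
  symm : ∀ u v (h : H.Adj u v), path v u h.symm = (path u v h).reverse
  branch_not_internal : ∀ u v (h : H.Adj u v) (x : β),
    branch x ∈ (path u v h).support → x = u ∨ x = v
  internally_disjoint : ∀ u v (h : H.Adj u v) u' v' (h' : H.Adj u' v'),
    s(u, v) ≠ s(u', v') → ∀ w, w ∈ (path u v h).support →
      w ∈ (path u' v' h').support → ∃ x, w = branch x

/-- The vertex set of the subdivision (as a subgraph of `G`). -/
def Subdivision.supp {α β : Type*} {G : SimpleGraph α} {H : SimpleGraph β}
    (S : Subdivision G H) : Set α :=
  {w | ∃ u v h, w ∈ (S.path u v h).support}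

/-- The edge set of the subdivision (as a subgraph of `G`). -/
def Subdivision.edgeSet {α β : Type*} {G : SimpleGraph α} {H : SimpleGraph β}
    (S : Subdivision G H) : Set (Sym2 α) :=
  {e | ∃ u v h, e ∈ (S.path u v h).edges}

/-- `c` is a proper 2-coloring for the edges in `E`. -/
def ProperOn {α : Type*} (c : α → ZMod 2) (E : Set (Sym2 α)) : Prop :=
  ∀ e ∈ E, ∀ a b, e = s(a, b) → c a ≠ c b

/-- The subdivision is bipartite as a subgraph of `G`. -/
def Subdivision.IsBipartite {α β : Type*} {G : SimpleGraph α} {H : SimpleGraph β}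
    (S : Subdivision G H) : Prop :=
  ∃ c : α → ZMod 2, ProperOn c S.edgeSet

/-!
A vertex `x ∈ X` meets the subdivision either as a branch vertex `S.branch b`, and then only on
the paths of edges at `b`, or as an inner vertex of the path of a single edge `uv`. Putting `b`,
respectively `u`, into `Y` thus costs one vertex of `H` per vertex of `X`, and every branch vertex
and path of `H - Y` survives in `G - X`.
-/

namespace SimpleGraph.Walk

variable {V : Type*} {G : SimpleGraph V} {s : Set V} {u v : V}

lemma induce_eq_reverse_induce {w : G.Walk u v} {w' : G.Walk v u} (h : w' = w.reverse)
    (hw : ∀ x ∈ w.support, x ∈ s) (hw' : ∀ x ∈ w'.support, x ∈ s) :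
    w'.induce s hw' = (w.induce s hw).reverse := by
  subst h
  refine map_injective_of_injective (f := (Embedding.induce (G := G) s).toHom)
    (Embedding.induce (G := G) s).injective _ _ ?_
  rw [← reverse_map, map_induce, map_induce]
  rfl

lemma IsPath.induce {w : G.Walk u v} (hp : w.IsPath) (hw : ∀ x ∈ w.support, x ∈ s) :
    (w.induce s hw).IsPath :=
  IsPath.of_map (f := (Embedding.induce s).toHom) (by rwa [map_induce])

lemma mem_support_induce_iff {w : G.Walk u v} {hw : ∀ x ∈ w.support, x ∈ s} {x : s} :
    x ∈ (w.induce s hw).support ↔ (x : V) ∈ w.support := by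
  simp

lemma edges_induce (w : G.Walk u v) (hw : ∀ x ∈ w.support, x ∈ s) :
    (w.induce s hw).edges.map (Sym2.map Subtype.val) = w.edges := by
  induction w with
  | nil => rfl
  | cons _ w ih => simp [ih]

end SimpleGraph.Walk

namespace Subdivision

variable {α β : Type*} {G : SimpleGraph α} {H : SimpleGraph β} (S : Subdivision G H)

def RestrictsTo (s : Set α) (t : Set β) : Prop :=
  (∀ b ∈ t, S.branch b ∈ s) ∧
    ∀ u v (h : H.Adj u v), u ∈ t → v ∈ t → ∀ x ∈ (S.path u v h).support, x ∈ s

variable {S} {s : Set α} {t : Set β}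

def restrict (hS : S.RestrictsTo s t) : Subdivision (G.induce s) (H.induce t) where
  branch := ⟨fun b => ⟨S.branch b, hS.1 b b.2⟩,
    fun _ _ hab => Subtype.ext (S.branch.injective (congrArg Subtype.val hab))⟩
  path u v h := (S.path u v h).induce s (hS.2 u v h u.2 v.2)
  isPath u v h := (S.isPath u v h).induce _
  symm u v h := Walk.induce_eq_reverse_induce (S.symm u v h) _ _
  branch_not_internal u v h x hx := by
    rw [Walk.mem_support_induce_iff] at hx
    simpa only [Subtype.ext_iff] using S.branch_not_internal u v h x hx
  internally_disjoint u v h u' v' h' hne w hw hw' := by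
    rw [Walk.mem_support_induce_iff] at hw hw'
    have hne' : s(u.1, v.1) ≠ s(u'.1, v'.1) := fun he => hne <| by
      simpa only [Sym2.eq_iff, Subtype.ext_iff] using he
    obtain ⟨b, hb⟩ := S.internally_disjoint u v h u' v' h' hne' w hw hw'
    have hbt : b ∈ t := by
      rcases S.branch_not_internal u v h b (hb ▸ hw) with rfl | rfl
      exacts [u.2, v.2]
    exact ⟨⟨b, hbt⟩, Subtype.ext hb⟩

lemma val_mem_supp_of_mem_supp_restrict (hS : S.RestrictsTo s t) {w : s}
    (hw : w ∈ (restrict hS).supp) : (w : α) ∈ S.supp := by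
  obtain ⟨u, v, h, hw⟩ := hw
  exact ⟨u, v, h, Walk.mem_support_induce_iff.1 hw⟩

lemma map_val_mem_edgeSet_of_mem_edgeSet_restrict (hS : S.RestrictsTo s t) {e : Sym2 s}
    (he : e ∈ (restrict hS).edgeSet) : e.map Subtype.val ∈ S.edgeSet := by
  obtain ⟨u, v, h, he⟩ := he
  exact ⟨u, v, h, (S.path u v h).edges_induce _ ▸ List.mem_map_of_mem he⟩

variable (S)

lemma exists_card_le_one_meeting_paths_through (x : α) :
    ∃ B : Finset β, B.card ≤ 1 ∧ (∀ b, S.branch b = x → b ∈ B) ∧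
      ∀ u v h, x ∈ (S.path u v h).support → u ∈ B ∨ v ∈ B := by
  by_cases hbranch : ∃ b, S.branch b = x
  · obtain ⟨b, rfl⟩ := hbranch
    refine ⟨{b}, (Finset.card_singleton b).le, fun b' hb' => ?_, fun u v h hb => ?_⟩
    · exact Finset.mem_singleton.2 (S.branch.injective hb')
    · rcases S.branch_not_internal u v h b hb with rfl | rfl <;> simp
  by_cases hon : ∃ u v h, x ∈ (S.path u v h).support
  · obtain ⟨u₀, v₀, h₀, hx₀⟩ := hon
    refine ⟨{u₀}, (Finset.card_singleton u₀).le, fun b hb => (hbranch ⟨b, hb⟩).elim,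
      fun u v h hx => ?_⟩
    have he : s(u, v) = s(u₀, v₀) := by
      by_contra hne
      obtain ⟨b, rfl⟩ := S.internally_disjoint u v h u₀ v₀ h₀ hne x hx hx₀
      exact hbranch ⟨b, rfl⟩
    rcases Sym2.eq_iff.1 he with ⟨rfl, -⟩ | ⟨-, rfl⟩ <;> simp
  · exact ⟨∅, by simp, fun b hb => (hbranch ⟨b, hb⟩).elim,
      fun u v h hx => (hon ⟨u, v, h, hx⟩).elim⟩

lemma exists_card_le_restrictsTo_compl (X : Finset α) :
    ∃ Y : Finset β, Y.card ≤ X.card ∧ S.RestrictsTo {a | a ∉ X} {b | b ∉ Y} := by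
  classical
  choose B hcard hbranch hpath using S.exists_card_le_one_meeting_paths_through
  refine ⟨X.biUnion B, ?_, fun b hb hbX => hb ?_, fun u v h hu hv x hx hxX => ?_⟩
  · simpa using Finset.card_biUnion_le_card_mul X B 1 fun x _ => hcard x
  · exact Finset.mem_biUnion.2 ⟨_, hbX, hbranch _ b rfl⟩
  · rcases hpath x u v h hx with hu' | hv'
    exacts [hu (Finset.mem_biUnion.2 ⟨x, hxX, hu'⟩), hv (Finset.mem_biUnion.2 ⟨x, hxX, hv'⟩)]

end Subdivision

theorem subdivision_delete_verts_general {α β : Type*}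
    (G : SimpleGraph α) (H : SimpleGraph β) (X : Finset α) (S : Subdivision G H) :
    ∃ (Y : Finset β) (S' : Subdivision (G.induce {a | a ∉ X}) (H.induce {b | b ∉ Y})),
      Y.card ≤ X.card ∧
      (∀ w ∈ S'.supp, (w : α) ∈ S.supp) ∧
      (∀ e ∈ S'.edgeSet, e.map Subtype.val ∈ S.edgeSet) := by
  obtain ⟨Y, hcard, hS⟩ := S.exists_card_le_restrictsTo_compl X
  exact ⟨Y, Subdivision.restrict hS, hcard,
    fun _ => Subdivision.val_mem_supp_of_mem_supp_restrict hS,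
    fun _ => Subdivision.map_val_mem_edgeSet_of_mem_edgeSet_restrict hS⟩

/-- Deleting a set `X` of vertices from a graph containing a subdivision of `H` leaves a
subdivision of `H - Y` for some `Y` with `|Y| ≤ |X|`, which is moreover a subgraph of the
original subdivision. -/
theorem subdivision_delete_verts {α β : Type*} [Fintype α] [Fintype β]
    [DecidableEq α] [DecidableEq β]
    (G : SimpleGraph α) (H : SimpleGraph β) (X : Finset α) (S : Subdivision G H) :
    ∃ (Y : Finset β) (S' : Subdivision (G.induce {a | a ∉ X}) (H.induce {b | b ∉ Y})),
      Y.card ≤ X.card ∧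
      (∀ w ∈ S'.supp, (w : α) ∈ S.supp) ∧
      (∀ e ∈ S'.edgeSet, e.map Subtype.val ∈ S.edgeSet) :=
  subdivision_delete_verts_general G H X S
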